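/- Let G be a finite group and M a non-normal maximal subgroup of G of rank r (the number of orbits of M on the right cosets of M in G, equivalently the number of double cosets of M). Then G is a setwise product of r+1 conjugates of M; in particular γ_cp(G) ≤ r+1. -/

import Mathlib

open Pointwise

/-- The conjugate subgroup `A ^ g = g⁻¹ A g`. -/
def conjugate {G : Type*} [Group G] (A : Subgroup G) (g : G) : Subgroup G :=
  Subgroup.map (MulAut.conj g⁻¹).toMonoidHom A

/-- `G` is a product, in some order, of `k` pairwise conjugate proper subgroups. -/
def IsConjProdCover {G : Type*} [Group G] (k : ℕ) : Prop :=
  ∃ l : List (Subgroup G), l.length = k ∧ 2 ≤ l.length ∧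
    (∀ A ∈ l, A ≠ ⊤) ∧ (∀ A ∈ l, ∀ B ∈ l, ∃ g : G, B = conjugate A g) ∧
    (l.map (fun A => (A : Set G))).prod = Set.univ

/-- `γ_cp(G)`. -/
noncomputable def gammaCP (G : Type*) [Group G] : ℕ∞ :=
  sInf {k : ℕ∞ | ∃ n : ℕ, k = (n : ℕ∞) ∧ IsConjProdCover (G := G) n}

/-!
The sets `M A₁ ⋯ Aₖ M`, with every `Aᵢ` a conjugate of `M`, are unions of `(M, M)`-double cosets.
As long as such a set `R M` is not all of `G`, some conjugate `A` of `M` makes `R A M` strictly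
larger: otherwise `R M` would be stable under right multiplication by every conjugate of `M`,
hence by the normal closure of `M`, which is `G` because `M` is maximal and not normal. Each step
therefore adds a double coset, so `r - 1` inserted conjugates, together with the two outer copies
of `M`, already give all of `G`.
-/

section

variable {G : Type*} [Group G]

theorem mem_conjugate {A : Subgroup G} {g x : G} : x ∈ conjugate A g ↔ g * x * g⁻¹ ∈ A := by
  refine ⟨?_, fun h => ⟨g * x * g⁻¹, h, by simp [mul_assoc]⟩⟩
  rintro ⟨a, ha, rfl⟩
  simpa [mul_assoc] using ha

theorem conjugate_one (A : Subgroup G) : conjugate A 1 = A := by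
  ext x; simp [mem_conjugate]

theorem conjugate_conjugate (A : Subgroup G) (g h : G) :
    conjugate (conjugate A g) h = conjugate A (g * h) := by
  ext x; simp [mem_conjugate, mul_assoc]

theorem conjugate_ne_top {A : Subgroup G} (hA : A ≠ ⊤) (g : G) : conjugate A g ≠ ⊤ := by
  refine fun h => hA (eq_top_iff.2 fun x _ => ?_)
  have hx := mem_conjugate.1 (h ▸ Subgroup.mem_top (g⁻¹ * x * g))
  simpa [mul_assoc] using hx

/-- `fun A => (A : Set G)` is elaborated by lifting the coercion through the list monad. -/
theorem map_fun_coe_eq_map_coe (l : List (Subgroup G)) :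
    l.map (fun A => (A : Set G)) = l.map ((↑) : Subgroup G → Set G) :=
  (List.map_id _).trans (List.flatMap_pure_eq_map _ l)

theorem one_mem_prod_map_coe (l : List (Subgroup G)) :
    (1 : G) ∈ (l.map ((↑) : Subgroup G → Set G)).prod := by
  induction l with
  | nil => exact Set.mem_one.2 rfl
  | cons A l ih => simpa using Set.mul_mem_mul A.one_mem ih

theorem coe_mul_coe_self (M : Subgroup G) : (M : Set G) * M = M :=
  M.toSubmonoid.coe_mul_self_eq

theorem coe_mul_mul_coe_absorb (M : Subgroup G) (X : Set G) :
    (M : Set G) * ((M : Set G) * X * M) * M ⊆ (M : Set G) * X * M := by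
  simp only [← mul_assoc, coe_mul_coe_self]
  simp only [mul_assoc, coe_mul_coe_self, subset_refl]

theorem subset_mul_subgroup_mul (R : Set G) (A : Subgroup G) (X : Set G) :
    R * X ⊆ R * (A : Set G) * X :=
  Set.mul_subset_mul_right (Set.subset_mul_left R A.one_mem)

section Growth

variable {M : Subgroup G}

theorem normalClosure_eq_top_of_isCoatom (hmax : IsCoatom M) (hnn : ¬ M.Normal) :
    Subgroup.normalClosure (M : Set G) = ⊤ := by
  refine (hmax.le_iff.1 Subgroup.le_normalClosure).resolve_right fun h => hnn ?_
  exact h ▸ Subgroup.normalClosure_normal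

theorem mul_mem_of_mem_normalClosure {Q : Set G} (hQ : ∀ g, Q * (conjugate M g : Set G) ⊆ Q)
    {q x : G} (hq : q ∈ Q) (hx : x ∈ Subgroup.normalClosure (M : Set G)) : q * x ∈ Q := by
  have mem_of_conj : ∀ y ∈ Group.conjugatesOfSet (M : Set G), ∃ g, y ∈ conjugate M g := by
    intro y hy
    obtain ⟨a, ha, hay⟩ := Group.mem_conjugatesOfSet_iff.1 hy
    obtain ⟨c, rfl⟩ := isConj_iff.1 hay
    exact ⟨c⁻¹, mem_conjugate.2 (by simpa [mul_assoc] using ha)⟩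
  induction hx using Subgroup.closure_induction'' generalizing q with
  | mem y hy =>
    obtain ⟨g, hg⟩ := mem_of_conj y hy
    exact hQ g (Set.mul_mem_mul hq hg)
  | inv_mem y hy =>
    obtain ⟨g, hg⟩ := mem_of_conj y hy
    exact hQ g (Set.mul_mem_mul hq (inv_mem hg))
  | one => simpa using hq
  | mul y z _ _ hy hz => simpa [mul_assoc] using hz (hy hq)

theorem eq_univ_of_mul_conjugate_subset (hmax : IsCoatom M) (hnn : ¬ M.Normal) {Q : Set G}
    (hne : Q.Nonempty) (hQ : ∀ g, Q * (conjugate M g : Set G) ⊆ Q) : Q = Set.univ := by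
  obtain ⟨q, hq⟩ := hne
  refine Set.eq_univ_of_forall fun x => ?_
  have hx : q⁻¹ * x ∈ Subgroup.normalClosure (M : Set G) := by
    simp [normalClosure_eq_top_of_isCoatom hmax hnn]
  simpa using mul_mem_of_mem_normalClosure hQ hq hx

theorem exists_ssubset_mul_conjugate_mul (hmax : IsCoatom M) (hnn : ¬ M.Normal) {R : Set G}
    (hR : R.Nonempty) (hRM : R * (M : Set G) ≠ Set.univ) :
    ∃ g, R * (M : Set G) ⊂ R * (conjugate M g : Set G) * (M : Set G) := by
  by_contra! h
  have heq : ∀ g, R * (conjugate M g : Set G) * (M : Set G) = R * (M : Set G) := fun g =>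
    ((subset_mul_subgroup_mul R _ _).eq_of_not_ssubset (h g)).symm
  refine hRM (eq_univ_of_mul_conjugate_subset hmax hnn (hR.mul ⟨1, M.one_mem⟩) fun g => ?_)
  rintro _ ⟨_, ⟨a, ha, m, hm, rfl⟩, x, hx, rfl⟩
  -- `a m x = a (m x m⁻¹) m` with `m x m⁻¹ ∈ conjugate M (g m⁻¹)`
  have hconj : m * x * m⁻¹ ∈ conjugate M (g * m⁻¹) := by
    rw [mem_conjugate]
    simpa [mul_assoc] using mem_conjugate.1 hx
  rw [← heq (g * m⁻¹)]
  exact ⟨_, Set.mul_mem_mul ha hconj, m, hm, by group⟩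

end Growth

instance [Finite G] (H K : Set G) : Finite (DoubleCoset.Quotient H K) :=
  Quotient.finite _

section DoubleCoset

variable {M : Subgroup G} {S : Set G}

theorem preimage_image_doubleCosetMk (hS : (M : Set G) * S * M ⊆ S) :
    DoubleCoset.mk M M ⁻¹' (DoubleCoset.mk M M '' S) = S := by
  refine (Set.subset_preimage_image _ _).antisymm' ?_
  rintro x ⟨y, hy, hyx⟩
  obtain ⟨a, ha, b, hb, rfl⟩ := (DoubleCoset.eq M M y x).1 hyx
  exact hS (Set.mul_mem_mul (Set.mul_mem_mul ha hy) hb)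

theorem ncard_image_doubleCosetMk_lt [Finite G] (hS : (M : Set G) * S * M ⊆ S) {T : Set G}
    (hST : S ⊂ T) : (DoubleCoset.mk M M '' S).ncard < (DoubleCoset.mk M M '' T).ncard := by
  refine Set.ncard_lt_ncard (Set.ssubset_iff_subset_ne.2 ⟨Set.image_mono hST.1, fun h => ?_⟩)
  refine hST.2 ?_
  rw [← preimage_image_doubleCosetMk hS, h]
  exact Set.subset_preimage_image _ _

theorem eq_univ_of_ncard_image_doubleCosetMk [Finite G] (hS : (M : Set G) * S * M ⊆ S)
    (hcard : Nat.card (DoubleCoset.Quotient (M : Set G) M) ≤ (DoubleCoset.mk M M '' S).ncard) :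
    S = Set.univ := by
  have himage : DoubleCoset.mk M M '' S = Set.univ :=
    Set.eq_of_subset_of_ncard_le (Set.subset_univ _) (by rwa [Set.ncard_univ])
  rw [← preimage_image_doubleCosetMk hS, himage, Set.preimage_univ]

end DoubleCoset

section Cover

variable [Finite G] {M : Subgroup G}

theorem exists_conjugates_mul_eq_univ_or_le_ncard (hmax : IsCoatom M) (hnn : ¬ M.Normal)
    (k : ℕ) :
    ∃ l : List (Subgroup G), l.length = k ∧ (∀ A ∈ l, ∃ g, A = conjugate M g) ∧
      let S := (M : Set G) * (l.map ((↑) : Subgroup G → Set G)).prod * (M : Set G)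
      S = Set.univ ∨ k + 1 ≤ (DoubleCoset.mk M M '' S).ncard := by
  induction k with
  | zero =>
    refine ⟨[], rfl, by simp, Or.inr ?_⟩
    simp only [List.map_nil, List.prod_nil, mul_one, coe_mul_coe_self]
    exact (Set.ncard_pos).2 ⟨_, 1, M.one_mem, rfl⟩
  | succ k ih =>
    obtain ⟨l, hlen, hconj, hS⟩ := ih
    set R := (M : Set G) * (l.map ((↑) : Subgroup G → Set G)).prod
    have hR1 : (1 : G) ∈ R := Set.subset_mul_right _ M.one_mem (one_mem_prod_map_coe l)
    suffices ∃ g, R * (conjugate M g : Set G) * (M : Set G) = Set.univ ∨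
        k + 1 < (DoubleCoset.mk M M '' (R * (conjugate M g : Set G) * (M : Set G))).ncard by
      obtain ⟨g, hg⟩ := this
      refine ⟨l ++ [conjugate M g], by simp [hlen], ?_, ?_⟩
      · simpa [or_imp, forall_and] using hconj
      · simpa [R, List.prod_append, mul_assoc] using hg
    by_cases huniv : R * (M : Set G) = Set.univ
    · exact ⟨1, Or.inl (Set.univ_subset_iff.1 (huniv ▸ subset_mul_subgroup_mul R _ M))⟩
    · obtain ⟨g, hg⟩ := exists_ssubset_mul_conjugate_mul hmax hnn ⟨1, hR1⟩ huniv
      have hlt := ncard_image_doubleCosetMk_lt (coe_mul_mul_coe_absorb M _) hg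
      exact ⟨g, Or.inr ((hS.resolve_left huniv).trans_lt hlt)⟩

theorem exists_conjugates_prod_eq_univ (hmax : IsCoatom M) (hnn : ¬ M.Normal) :
    ∃ l : List (Subgroup G), l.length = Nat.card (DoubleCoset.Quotient (M : Set G) M) + 1 ∧
      (∀ A ∈ l, ∃ g, A = conjugate M g) ∧ (l.map ((↑) : Subgroup G → Set G)).prod = Set.univ := by
  obtain ⟨k, hk⟩ : ∃ k, Nat.card (DoubleCoset.Quotient (M : Set G) M) = k + 1 :=
    Nat.exists_eq_succ_of_ne_zero Nat.card_pos.ne'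
  obtain ⟨l, hlen, hconj, hS⟩ := exists_conjugates_mul_eq_univ_or_le_ncard hmax hnn k
  replace hS := hS.elim id fun h =>
    eq_univ_of_ncard_image_doubleCosetMk (coe_mul_mul_coe_absorb M _) (hk ▸ h)
  refine ⟨M :: (l ++ [M]), by simp [hlen, hk], ?_, by simpa [mul_assoc] using hS⟩
  have hM : ∃ g, M = conjugate M g := ⟨1, (conjugate_one M).symm⟩
  simpa [or_imp, forall_and, hM] using hconj

end Cover

theorem isConjProdCover_of_forall_eq_conjugate {M : Subgroup G} (hM : M ≠ ⊤)
    {l : List (Subgroup G)} (hl : 2 ≤ l.length) (hconj : ∀ A ∈ l, ∃ g, A = conjugate M g)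
    (hprod : (l.map ((↑) : Subgroup G → Set G)).prod = Set.univ) :
    IsConjProdCover (G := G) l.length := by
  refine ⟨l, rfl, hl, ?_, ?_, by rwa [map_fun_coe_eq_map_coe]⟩
  · intro A hA
    obtain ⟨g, rfl⟩ := hconj A hA
    exact conjugate_ne_top hM g
  · intro A hA B hB
    obtain ⟨g, rfl⟩ := hconj A hA
    obtain ⟨g', rfl⟩ := hconj B hB
    exact ⟨g⁻¹ * g', by rw [conjugate_conjugate, mul_inv_cancel_left]⟩

theorem gammaCP_le_of_isConjProdCover {n : ℕ} (h : IsConjProdCover (G := G) n) :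
    gammaCP G ≤ n :=
  sInf_le ⟨n, rfl, h⟩

end

theorem stmt_9 {G : Type*} [Group G] [Finite G] (M : Subgroup G)
    (hmax : IsCoatom M) (hnn : ¬ M.Normal)
    (r : ℕ) (hr : r = Nat.card (DoubleCoset.Quotient (M : Set G) (M : Set G))) :
    (∃ l : List (Subgroup G), l.length = r + 1 ∧
        (∀ A ∈ l, ∃ g : G, A = conjugate M g) ∧
        (l.map (fun A => (A : Set G))).prod = Set.univ) ∧
      gammaCP G ≤ (r + 1 : ℕ) := by
  subst hr
  obtain ⟨l, hlen, hconj, hprod⟩ := exists_conjugates_prod_eq_univ hmax hnn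
  refine ⟨⟨l, hlen, hconj, by rwa [map_fun_coe_eq_map_coe]⟩, ?_⟩
  have hl : 2 ≤ l.length := hlen ▸ Nat.succ_le_succ Nat.card_pos
  exact hlen ▸ gammaCP_le_of_isConjProdCover
    (isConjProdCover_of_forall_eq_conjugate hmax.1 hl hconj hprod)
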